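/- Let L be a strongly universal prefix code, let μ be a probability mass function on 𝒳 with full support, and let ν be any probability mass function on 𝒳 with full support. If X_1, X_2, … are i.i.d. with distribution μ, then (1/n)( −L(X_1^n) − log ν(X_1^n) ) → D(μ‖ν) almost surely as n → ∞. In particular, the modified CUSUM statistic −L(X_1^n) − log ν(X_1^n) − nλ has asymptotic drift rate D(μ1‖ν) − λ per sample under the post-change source μ1 and drift rate D(μ0‖ν) − λ per sample under the pre-change source μ0. -/

import Mathlib

open MeasureTheory Filter
open scoped ENNReal NNReal Topology BigOperators Classical

namespace ChangeDetect

variable {𝒳 : Type} [Fintype 𝒳] [Nonempty 𝒳] [MeasurableSpace 𝒳]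

/-- A probability mass function on `𝒳`. -/
def IsPMF (p : 𝒳 → ℝ) : Prop := (∀ a, 0 ≤ p a) ∧ ∑ a, p a = 1

/-- A probability mass function on `𝒳` with full support. -/
def IsPosPMF (p : 𝒳 → ℝ) : Prop := (∀ a, 0 < p a) ∧ ∑ a, p a = 1

/-- `L` is a family of length functions of fixed-to-variable prefix codes,
i.e. it satisfies Kraft's inequality for each block length `n`. -/
def Kraft (L : (n : ℕ) → (Fin n → 𝒳) → ℕ) : Prop :=
  ∀ n : ℕ, ∑ w : Fin n → 𝒳, (2 : ℝ) ^ (-(L n w : ℝ)) ≤ 1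

/-- i.i.d. (memoryless) probability of a word. -/
noncomputable def wp (p : 𝒳 → ℝ) {n : ℕ} (w : Fin n → 𝒳) : ℝ := ∏ i, p (w i)

/-- Strong universality of the code `L`:
`R_L^n = sup_μ max_w (L(w) + log₂ μ(w)) = o(n)`, the sup over memoryless sources. -/
def StronglyUniversal (L : (n : ℕ) → (Fin n → 𝒳) → ℕ) : Prop :=
  ∃ R : ℕ → ℝ, Tendsto (fun n => R n / n) atTop (𝓝 0) ∧
    ∀ (n : ℕ) (μ : 𝒳 → ℝ), IsPosPMF μ → ∀ w : Fin n → 𝒳,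
      (L n w : ℝ) + Real.logb 2 (wp μ w) ≤ R n

/-- Kullback–Leibler divergence in bits between two pmfs on `𝒳`. -/
noncomputable def D (p q : 𝒳 → ℝ) : ℝ := ∑ a, p a * Real.logb 2 (p a / q a)

/-- The word `x_{s+1}, …, x_{s+n}` of the sequence `x`. -/
def seg (x : ℕ → 𝒳) (s n : ℕ) : Fin n → 𝒳 := fun i => x (s + (i : ℕ))

/-- `P` is the joint law of a sequence of independent observations with `X_{i+1} ∼ ps i`
(characterized by its values on cylinder sets). -/
def IsProductLaw (ps : ℕ → 𝒳 → ℝ) (P : Measure (ℕ → 𝒳)) : Prop :=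
  IsProbabilityMeasure P ∧
    ∀ (n : ℕ) (w : Fin n → 𝒳),
      P {x | ∀ i : Fin n, x (i : ℕ) = w i} = ∏ i : Fin n, ENNReal.ofReal (ps (i : ℕ) (w i))

/-- `P` is the law of an i.i.d. sequence with marginal pmf `p`. -/
def IsIIDLaw (p : 𝒳 → ℝ) (P : Measure (ℕ → 𝒳)) : Prop := IsProductLaw (fun _ => p) P

/-- The one-sided test statistic `−L(x_{s+1}^{s+n}) − log₂ ν(x_{s+1}^{s+n}) − nλ`. -/
noncomputable def stat (L : (n : ℕ) → (Fin n → 𝒳) → ℕ) (ν : 𝒳 → ℝ) (lam : ℝ)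
    (s : ℕ) (x : ℕ → 𝒳) (n : ℕ) : ℝ :=
  -(L n (seg x s n) : ℝ) - Real.logb 2 (wp ν (seg x s n)) - n * lam

/-- The auxiliary stopping time
`N(α) = inf {n ≥ 1 : −L(x_{s+1}^{s+n}) − log₂ ν(x_{s+1}^{s+n}) − nλ ≥ −log₂ α}`
(`⊤` if the set is empty). -/
noncomputable def Naux (L : (n : ℕ) → (Fin n → 𝒳) → ℕ) (ν : 𝒳 → ℝ) (lam α : ℝ)
    (s : ℕ) (x : ℕ → 𝒳) : ℕ∞ :=
  sInf {m : ℕ∞ | ∃ n : ℕ, m = n ∧ 1 ≤ n ∧ -Real.logb 2 α ≤ stat L ν lam s x n}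

/-- The CUSUM statistic `−L(x_{s+k+1}^{s+n}) − log₂ ν(x_{s+k+1}^{s+n}) − nλ`
(here `0 ≤ k < n`, corresponding to the 1-indexed segment `x_{k+1}^{n}` after `s`
training samples). -/
noncomputable def cstat (L : (n : ℕ) → (Fin n → 𝒳) → ℕ) (ν : 𝒳 → ℝ) (lam : ℝ)
    (s : ℕ) (x : ℕ → 𝒳) (k n : ℕ) : ℝ :=
  -(L (n - k) (seg x (s + k) (n - k)) : ℝ)
    - Real.logb 2 (wp ν (seg x (s + k) (n - k))) - n * lam

/-- The CUSUM stopping time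
`M(γ) = inf {n ≥ 1 : max_{1 ≤ k ≤ n} (−L(x_k^n) − log₂ ν(x_k^n) − nλ) ≥ log₂ γ}`. -/
noncomputable def Mstop (L : (n : ℕ) → (Fin n → 𝒳) → ℕ) (ν : 𝒳 → ℝ) (lam γ : ℝ)
    (s : ℕ) (x : ℕ → 𝒳) : ℕ∞ :=
  sInf {m : ℕ∞ | ∃ n : ℕ, m = n ∧ 1 ≤ n ∧ ∃ k < n, Real.logb 2 γ ≤ cstat L ν lam s x k n}

/-- Expectation of an (extended) stopping time. -/
noncomputable def lexp (P : Measure (ℕ → 𝒳)) (N : (ℕ → 𝒳) → ℕ∞) : ℝ≥0∞ :=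
  ∫⁻ x, (N x : ℝ≥0∞) ∂P

/-- The σ-algebra generated by the first `m` coordinates. -/
def firstCoords (𝒳 : Type) [MeasurableSpace 𝒳] (m : ℕ) : MeasurableSpace (ℕ → 𝒳) :=
  MeasurableSpace.comap (fun x => (fun i : Fin m => x (i : ℕ))) inferInstance

/-- An (extended) stopping variable of the observation sequence. -/
def IsSeqStoppingTime (N : (ℕ → 𝒳) → ℕ∞) : Prop :=
  ∀ n : ℕ, MeasurableSet[firstCoords 𝒳 n] {x | N x ≤ (n : ℕ∞)}

/-- Lorden's worst-case expected delay
`Ē₁(N) = sup_{m ≥ 1} ess sup E_m[(N − m + 1)⁺ | X_1, …, X_{m−1}]`,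
where under `P_m` the first `m − 1` observations are i.i.d. with the pre-change law
(the full i.i.d. pre-change law is `P0`) and the observations from time `m` on are
i.i.d. with the post-change law (full i.i.d. law `P1`).  The conditional expectation
given `X_1, …, X_{m−1}` is realized by integrating out the coordinates from `m` on. -/
noncomputable def lordenE1 (P0 P1 : Measure (ℕ → 𝒳)) (N : (ℕ → 𝒳) → ℕ∞) : ℝ≥0∞ :=
  ⨆ m : ℕ, essSup
    (fun x => ∫⁻ y, ((N (fun i => if i < m then x i else y i) : ℝ≥0∞) - m) ∂P1) P0

/-- Empirical distribution of the first `n0` samples of the sequence `x`. -/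
noncomputable def emp (n0 : ℕ) (x : ℕ → 𝒳) (a : 𝒳) : ℝ :=
  ((Finset.range n0).filter (fun i => x i = a)).card / n0

/-- The optimal worst-case delay over all stopping times with `E₀(S) ≥ γ`
(Lorden's class `S_γ`). -/
noncomputable def minDelay (P0 P1 : Measure (ℕ → 𝒳)) (γ : ℝ) : ℝ≥0∞ :=
  sInf {r : ℝ≥0∞ | ∃ N : (ℕ → 𝒳) → ℕ∞, IsSeqStoppingTime N ∧
    ENNReal.ofReal γ ≤ lexp P0 N ∧ r = lordenE1 P0 P1 N}

end ChangeDetect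

/-!
Write `-L(x₁ⁿ) - log ν(x₁ⁿ) = (-L(x₁ⁿ) - log μ(x₁ⁿ)) + ∑ᵢ log (μ(xᵢ)/ν(xᵢ))`.
Divided by `n`, the sum tends to `D(μ‖ν)` almost surely: on a finite alphabet the strong law of
large numbers follows from Chernoff bounds and Borel–Cantelli. The first term is at least
`-Rₙ = o(n)` by strong universality, while Kraft's inequality gives
`P(-L(X₁ⁿ) - log μ(X₁ⁿ) ≥ εn) ≤ 2^{-εn}` (Barron's lemma), so by Borel–Cantelli it is
eventually below `εn` almost surely. Only subadditivity of `P` over cylinder sets enters, so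
nothing is assumed about the σ-algebra on `𝒳` (the coordinates need not be random variables).
-/

namespace ChangeDetect

open Finset Real

variable {𝒳 : Type}

lemma ae_tendsto_of_forall_ae_eventually_dist_lt {α ι E : Type*} [MeasurableSpace α]
    [PseudoMetricSpace E] {m : Measure α} {l : Filter ι} {f : α → ι → E} {c : E}
    (h : ∀ ε > 0, ∀ᵐ x ∂m, ∀ᶠ n in l, dist (f x n) c < ε) :
    ∀ᵐ x ∂m, Tendsto (f x) l (𝓝 c) := by
  have hk : ∀ᵐ x ∂m, ∀ k : ℕ, ∀ᶠ n in l, dist (f x n) c < 1 / ((k : ℝ) + 1) :=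
    ae_all_iff.2 fun k => h _ Nat.one_div_pos_of_nat
  filter_upwards [hk] with x hx
  refine Metric.tendsto_nhds.2 fun ε hε => ?_
  obtain ⟨k, hk⟩ := exists_nat_one_div_lt hε
  exact (hx k).mono fun n hn => hn.trans hk

lemma wp_nonneg {p : 𝒳 → ℝ} (hp : ∀ a, 0 ≤ p a) {n : ℕ} (w : Fin n → 𝒳) : 0 ≤ wp p w :=
  prod_nonneg fun i _ => hp (w i)

lemma wp_pos {p : 𝒳 → ℝ} (hp : ∀ a, 0 < p a) {n : ℕ} (w : Fin n → 𝒳) : 0 < wp p w :=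
  prod_pos fun i _ => hp (w i)

lemma logb_wp_eq_sub_sum_logb_div {p q : 𝒳 → ℝ} (hp : ∀ a, p a ≠ 0) (hq : ∀ a, q a ≠ 0)
    {n : ℕ} (w : Fin n → 𝒳) :
    logb 2 (wp q w) = logb 2 (wp p w) - ∑ i, logb 2 (p (w i) / q (w i)) := by
  simp only [wp, logb_prod _ _ (fun i _ => hp (w i)), logb_prod _ _ (fun i _ => hq (w i)),
    logb_div (hp _) (hq _), sum_sub_distrib, sub_sub_cancel]

lemma measure_seg_mem_le [MeasurableSpace 𝒳] {p : 𝒳 → ℝ} (hp : ∀ a, 0 ≤ p a)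
    {P : Measure (ℕ → 𝒳)} (hP : IsIIDLaw p P) {n : ℕ} (S : Finset (Fin n → 𝒳)) :
    P {x | seg x 0 n ∈ S} ≤ ENNReal.ofReal (∑ w ∈ S, wp p w) := by
  have hsub : {x : ℕ → 𝒳 | seg x 0 n ∈ S} ⊆ ⋃ w ∈ S, {x | ∀ i : Fin n, x i = w i} :=
    fun x hx => Set.mem_biUnion hx fun i => by simp [seg]
  calc P {x | seg x 0 n ∈ S}
      ≤ ∑ w ∈ S, P {x | ∀ i : Fin n, x i = w i} :=
        (measure_mono hsub).trans (measure_biUnion_finset_le _ _)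
    _ = ∑ w ∈ S, ENNReal.ofReal (wp p w) := by
        refine sum_congr rfl fun w _ => ?_
        rw [hP.2 n w, wp, ENNReal.ofReal_prod_of_nonneg fun i _ => hp (w i)]
    _ = ENNReal.ofReal (∑ w ∈ S, wp p w) :=
        (ENNReal.ofReal_sum_of_nonneg fun w _ => wp_nonneg hp w).symm

lemma ae_eventually_seg_notMem [MeasurableSpace 𝒳] {p : 𝒳 → ℝ} (hp : ∀ a, 0 ≤ p a)
    {P : Measure (ℕ → 𝒳)} (hP : IsIIDLaw p P) (S : (n : ℕ) → Finset (Fin n → 𝒳)) {b : ℕ → ℝ}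
    (hb : Summable b) (hSb : ∀ n, ∑ w ∈ S n, wp p w ≤ b n) :
    ∀ᵐ x ∂P, ∀ᶠ n in atTop, seg x 0 n ∉ S n := by
  have hb0 : ∀ n, 0 ≤ b n := fun n => (sum_nonneg fun w _ => wp_nonneg hp w).trans (hSb n)
  refine ae_eventually_notMem (ne_top_of_le_ne_top (ENNReal.ofReal_ne_top (r := ∑' n, b n)) ?_)
  calc ∑' n, P {x | seg x 0 n ∈ S n}
      ≤ ∑' n, ENNReal.ofReal (b n) := ENNReal.tsum_le_tsum fun n =>
        (measure_seg_mem_le hp hP (S n)).trans (ENNReal.ofReal_le_ofReal (hSb n))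
    _ = ENNReal.ofReal (∑' n, b n) := (ENNReal.ofReal_tsum_of_nonneg hb0 hb).symm

lemma hasDerivAt_sum_mul_exp [Fintype 𝒳] (p z : 𝒳 → ℝ) (t : ℝ) :
    HasDerivAt (fun t => ∑ a, p a * exp (t * z a)) (∑ a, p a * (z a * exp (t * z a))) t :=
  HasDerivAt.fun_sum fun a _ =>
    (((hasDerivAt_id t).mul_const (z a)).exp.const_mul (p a)).congr_deriv (by simp [mul_comm])

lemma exists_pos_sum_mul_exp_lt_one [Fintype 𝒳] {p z : 𝒳 → ℝ} (hp : ∑ a, p a = 1)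
    (hz : ∑ a, p a * z a < 0) : ∃ t > 0, ∑ a, p a * exp (t * z a) < 1 := by
  have hder := hasDerivAt_sum_mul_exp p z 0
  simp only [zero_mul, exp_zero, mul_one] at hder
  obtain ⟨t, hslope, ht⟩ := ((hder.hasDerivWithinAt (s := Set.Ioi 0)).limsup_slope_le'
    (lt_irrefl 0) hz |>.and self_mem_nhdsWithin).exists
  refine ⟨t, ht, ?_⟩
  rw [slope_def_field, sub_zero, div_neg_iff] at hslope
  simp only [zero_mul, exp_zero, mul_one, hp] at hslope
  rcases hslope with ⟨-, h⟩ | ⟨h, -⟩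
  · exact absurd ht (not_lt.2 h.le)
  · linarith

lemma sum_wp_filter_sum_nonneg_le [Fintype 𝒳] {p : 𝒳 → ℝ} (hp : ∀ a, 0 ≤ p a) (z : 𝒳 → ℝ)
    {t : ℝ} (ht : 0 ≤ t) (n : ℕ) :
    ∑ w ∈ univ.filter (fun w : Fin n → 𝒳 => 0 ≤ ∑ i, z (w i)), wp p w
      ≤ (∑ a, p a * exp (t * z a)) ^ n := by
  calc ∑ w ∈ univ.filter (fun w : Fin n → 𝒳 => 0 ≤ ∑ i, z (w i)), wp p w
      ≤ ∑ w ∈ univ.filter (fun w : Fin n → 𝒳 => 0 ≤ ∑ i, z (w i)),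
          wp p w * exp (t * ∑ i, z (w i)) := by
        refine sum_le_sum fun w hw => le_mul_of_one_le_right (wp_nonneg hp w) ?_
        exact one_le_exp (mul_nonneg ht (mem_filter.1 hw).2)
    _ ≤ ∑ w : Fin n → 𝒳, wp p w * exp (t * ∑ i, z (w i)) :=
        sum_le_sum_of_subset_of_nonneg (filter_subset _ _) fun w _ _ =>
          mul_nonneg (wp_nonneg hp w) (exp_pos _).le
    _ = ∑ w : Fin n → 𝒳, ∏ i, p (w i) * exp (t * z (w i)) := by
        simp only [wp, mul_sum, exp_sum, prod_mul_distrib]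
    _ = (∑ a, p a * exp (t * z a)) ^ n :=
        (Fintype.sum_pow (fun a => p a * exp (t * z a)) n).symm

lemma ae_eventually_sum_seg_neg [Fintype 𝒳] [MeasurableSpace 𝒳] {p : 𝒳 → ℝ} (hp : IsPMF p)
    {P : Measure (ℕ → 𝒳)} (hP : IsIIDLaw p P) {z : 𝒳 → ℝ} (hz : ∑ a, p a * z a < 0) :
    ∀ᵐ x ∂P, ∀ᶠ n in atTop, ∑ i, z (seg x 0 n i) < 0 := by
  obtain ⟨t, ht, hlt⟩ := exists_pos_sum_mul_exp_lt_one hp.2 hz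
  have hge : 0 ≤ ∑ a, p a * exp (t * z a) :=
    sum_nonneg fun a _ => mul_nonneg (hp.1 a) (exp_pos _).le
  filter_upwards [ae_eventually_seg_notMem hp.1 hP _ (summable_geometric_of_lt_one hge hlt)
    (sum_wp_filter_sum_nonneg_le hp.1 z ht.le)] with x hx
  filter_upwards [hx] with n hn
  simpa using hn

lemma sum_mul_sub_const [Fintype 𝒳] {p : 𝒳 → ℝ} (hp : ∑ a, p a = 1) (z : 𝒳 → ℝ) (c : ℝ) :
    ∑ a, p a * (z a - c) = ∑ a, p a * z a - c := by
  simp only [mul_sub, sum_sub_distrib, ← sum_mul, hp, one_mul]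

lemma ae_tendsto_sum_seg_div [Fintype 𝒳] [MeasurableSpace 𝒳] {p : 𝒳 → ℝ} (hp : IsPMF p)
    {P : Measure (ℕ → 𝒳)} (hP : IsIIDLaw p P) (z : 𝒳 → ℝ) :
    ∀ᵐ x ∂P, Tendsto (fun n : ℕ => (∑ i, z (seg x 0 n i)) / n) atTop
      (𝓝 (∑ a, p a * z a)) := by
  refine ae_tendsto_of_forall_ae_eventually_dist_lt fun ε hε => ?_
  set c := ∑ a, p a * z a
  have hup := ae_eventually_sum_seg_neg hp hP (z := fun a => z a - (c + ε))
    (by rw [sum_mul_sub_const hp.2]; linarith)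
  have hlow := ae_eventually_sum_seg_neg hp hP (z := fun a => -z a - (-c + ε))
    (by rw [sum_mul_sub_const hp.2]; simp only [mul_neg, sum_neg_distrib]; linarith)
  filter_upwards [hup, hlow] with x hxu hxl
  filter_upwards [hxu, hxl, eventually_gt_atTop 0] with n hnu hnl hn
  have hn : (0 : ℝ) < n := Nat.cast_pos.2 hn
  simp only [sum_sub_distrib, sum_neg_distrib, sum_const, card_univ, Fintype.card_fin,
    nsmul_eq_mul] at hnu hnl
  rw [Real.dist_eq, abs_sub_lt_iff, sub_lt_iff_lt_add', sub_lt_comm, div_lt_iff₀ hn,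
    lt_div_iff₀ hn]
  constructor <;> linarith

lemma sum_wp_filter_le_of_kraft [Fintype 𝒳] {L : (n : ℕ) → (Fin n → 𝒳) → ℕ} (hL : Kraft L)
    {p : 𝒳 → ℝ} (hp : ∀ a, 0 < p a) (n : ℕ) (c : ℝ) :
    ∑ w ∈ univ.filter (fun w : Fin n → 𝒳 => c ≤ -(L n w : ℝ) - logb 2 (wp p w)), wp p w
      ≤ 2 ^ (-c) := by
  calc ∑ w ∈ univ.filter (fun w : Fin n → 𝒳 => c ≤ -(L n w : ℝ) - logb 2 (wp p w)), wp p w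
      ≤ ∑ w ∈ univ.filter (fun w : Fin n → 𝒳 => c ≤ -(L n w : ℝ) - logb 2 (wp p w)),
          (2 : ℝ) ^ (-c) * 2 ^ (-(L n w : ℝ)) := by
        refine sum_le_sum fun w hw => ?_
        rw [← rpow_logb two_pos (by norm_num) (wp_pos hp w), ← rpow_add two_pos]
        exact rpow_le_rpow_of_exponent_le one_le_two (by linarith [(mem_filter.1 hw).2])
    _ ≤ ∑ w : Fin n → 𝒳, (2 : ℝ) ^ (-c) * 2 ^ (-(L n w : ℝ)) :=
        sum_le_sum_of_subset_of_nonneg (filter_subset _ _) fun w _ _ => by positivity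
    _ ≤ 2 ^ (-c) := by
        rw [← mul_sum]
        exact mul_le_of_le_one_right (by positivity) (hL n)

lemma ae_eventually_neg_L_sub_logb_wp_lt [Fintype 𝒳] [MeasurableSpace 𝒳]
    {L : (n : ℕ) → (Fin n → 𝒳) → ℕ} (hL : Kraft L) {p : 𝒳 → ℝ} (hp : ∀ a, 0 < p a)
    {P : Measure (ℕ → 𝒳)} (hP : IsIIDLaw p P) {ε : ℝ} (hε : 0 < ε) :
    ∀ᵐ x ∂P, ∀ᶠ n in atTop, -(L n (seg x 0 n) : ℝ) - logb 2 (wp p (seg x 0 n)) < ε * n := by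
  have hgeom : Summable fun n : ℕ => (2 : ℝ) ^ (-(ε * n)) := by
    simp_rw [neg_mul_eq_neg_mul, rpow_mul two_pos.le, rpow_natCast]
    exact summable_geometric_of_lt_one (by positivity)
      (rpow_lt_one_of_one_lt_of_neg one_lt_two (neg_neg_iff_pos.2 hε))
  filter_upwards [ae_eventually_seg_notMem (fun a => (hp a).le) hP _ hgeom
    fun n => sum_wp_filter_le_of_kraft hL hp n (ε * n)] with x hx
  filter_upwards [hx] with n hn
  simpa using hn

lemma ae_tendsto_neg_L_sub_logb_wp_div [Fintype 𝒳] [MeasurableSpace 𝒳]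
    {L : (n : ℕ) → (Fin n → 𝒳) → ℕ} (hL : Kraft L) (hU : StronglyUniversal L) {p : 𝒳 → ℝ}
    (hp : IsPosPMF p) {P : Measure (ℕ → 𝒳)} (hP : IsIIDLaw p P) :
    ∀ᵐ x ∂P, Tendsto (fun n : ℕ => (-(L n (seg x 0 n) : ℝ) - logb 2 (wp p (seg x 0 n))) / n)
      atTop (𝓝 0) := by
  obtain ⟨R, hR, hLR⟩ := hU
  refine ae_tendsto_of_forall_ae_eventually_dist_lt fun ε hε => ?_
  filter_upwards [ae_eventually_neg_L_sub_logb_wp_lt hL hp.1 hP hε] with x hx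
  filter_upwards [hx, hR.eventually (Iio_mem_nhds hε), eventually_gt_atTop 0] with n hup hRn hn
  have hn : (0 : ℝ) < n := Nat.cast_pos.2 hn
  have hRn : R n < ε * n := (div_lt_iff₀ hn).1 hRn
  have hlow := hLR n p hp (seg x 0 n)
  rw [Real.dist_eq, sub_zero, abs_lt, lt_div_iff₀ hn, div_lt_iff₀ hn]
  constructor <;> linarith

theorem stmt15_general {𝒳 : Type} [Fintype 𝒳] [MeasurableSpace 𝒳]
    (μ ν : 𝒳 → ℝ) (hμ : IsPosPMF μ) (hν : IsPosPMF ν)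
    (L : (n : ℕ) → (Fin n → 𝒳) → ℕ) (hL : Kraft L) (hU : StronglyUniversal L)
    (P : Measure (ℕ → 𝒳)) (hP : IsIIDLaw μ P) (lam : ℝ) :
    (∀ᵐ x ∂P, Tendsto (fun n : ℕ =>
        (-(L n (seg x 0 n) : ℝ) - Real.logb 2 (wp ν (seg x 0 n))) / n)
      atTop (𝓝 (D μ ν))) ∧
    (∀ᵐ x ∂P, Tendsto (fun n : ℕ => stat L ν lam 0 x n / n)
      atTop (𝓝 (D μ ν - lam))) := by
  have hlim : ∀ᵐ x ∂P, Tendsto (fun n : ℕ =>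
      (-(L n (seg x 0 n) : ℝ) - logb 2 (wp ν (seg x 0 n))) / n) atTop (𝓝 (D μ ν)) := by
    filter_upwards [ae_tendsto_neg_L_sub_logb_wp_div hL hU hμ hP,
      ae_tendsto_sum_seg_div ⟨fun a => (hμ.1 a).le, hμ.2⟩ hP fun a => logb 2 (μ a / ν a)]
      with x hcode hllr
    refine ((zero_add (D μ ν)) ▸ hcode.add hllr).congr fun n => ?_
    rw [logb_wp_eq_sub_sum_logb_div (fun a => (hμ.1 a).ne') (fun a => (hν.1 a).ne'), ← add_div]
    ring_nf
  refine ⟨hlim, ?_⟩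
  filter_upwards [hlim] with x hx
  refine (hx.sub_const lam).congr' ?_
  filter_upwards [eventually_ne_atTop 0] with n hn
  rw [stat, sub_div (_ - _), mul_div_cancel_left₀ _ (Nat.cast_ne_zero.2 hn)]

/-- for a strongly universal prefix code `L` and i.i.d. samples from
`μ`, `(1/n)(−L(X_1^n) − log₂ ν(X_1^n)) → D(μ‖ν)` a.s.; in particular the modified
CUSUM statistic `−L(X_1^n) − log₂ ν(X_1^n) − nλ` has asymptotic drift rate
`D(μ‖ν) − λ` per sample (applied with `μ = μ1` after the change and `μ = μ0`
before the change). -/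
theorem stmt15 {𝒳 : Type} [Fintype 𝒳] [Nonempty 𝒳] [MeasurableSpace 𝒳]
    (μ ν : 𝒳 → ℝ) (hμ : IsPosPMF μ) (hν : IsPosPMF ν)
    (L : (n : ℕ) → (Fin n → 𝒳) → ℕ) (hL : Kraft L) (hU : StronglyUniversal L)
    (P : Measure (ℕ → 𝒳)) (hP : IsIIDLaw μ P) (lam : ℝ) :
    (∀ᵐ x ∂P, Tendsto (fun n : ℕ =>
        (-(L n (seg x 0 n) : ℝ) - Real.logb 2 (wp ν (seg x 0 n))) / n)
      atTop (𝓝 (D μ ν))) ∧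
    (∀ᵐ x ∂P, Tendsto (fun n : ℕ => stat L ν lam 0 x n / n)
      atTop (𝓝 (D μ ν - lam))) :=
  stmt15_general μ ν hμ hν L hL hU P hP lam

end ChangeDetect
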